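/- Let t ≥ 0, x ∈ ℝ and C, R > 0, and let G be holomorphic on {w ∈ ℂ : |w| > R} with |G(w) − (w − x + 2t/w)| ≤ C·|w|⁻² for all |w| > R. Then there exist R''' ≥ R, C''' > 0 (depending only on R, C, x, t) and a holomorphic function S on {w ∈ ℂ : |w| > R'''} such that S(w)² = G'(w)/G(w)² and |w·S(w) − (1 + x/w + (x² − 3t)/w²)| ≤ C'''·|w|⁻³ for all |w| > R'''. -/

import Mathlib

/-!
Write `G w = w·q(1/w) + E w` with `q z = 1 - x z + 2t z²` and `E = O(w⁻²)`; Cauchy's estimate on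
the discs of radius `|w|/2` gives `E' = O(w⁻³)`. With `Y = G/w → 1` we have `Q := w²G'/G² = G'/Y²`,
and `G' - P²Y² = E' - ((P q)² - q') - P²(Y + q)(Y - q)` is a sum of three `O(w⁻³)` terms, so
`Q = P² + O(w⁻³)` for `P = 1 + x/w + (x² - 3t)/w²`. The principal square root has nonnegative real
part, hence `|√Q - P| · Re P ≤ |Q - P²|`, and `S = √Q / w` works.
-/

open Filter Asymptotics Bornology Metric Complex Topology

lemma hasDerivAt_sub_add_div (a b : ℂ) {w : ℂ} (hw : w ≠ 0) :
    HasDerivAt (fun w => w - a + b / w) (1 - b / w ^ 2) w := by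
  have h := ((hasDerivAt_id' w).sub_const a).add ((hasDerivAt_const w b).div (hasDerivAt_id' w) hw)
  exact h.congr_deriv (by ring)

lemma tendsto_inv_pow_cobounded {n : ℕ} (hn : n ≠ 0) :
    Tendsto (fun w : ℂ => w⁻¹ ^ n) (cobounded ℂ) (𝓝 0) := by
  simpa [zero_pow hn] using (tendsto_inv₀_cobounded (α := ℂ)).pow n

lemma tendsto_one_add_div_add_div_sq (a b : ℂ) :
    Tendsto (fun w : ℂ => 1 + a / w + b / w ^ 2) (cobounded ℂ) (𝓝 1) := by
  have hz := tendsto_inv₀_cobounded (α := ℂ)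
  simpa [div_eq_mul_inv] using (tendsto_const_nhds.add (hz.const_mul a)).add ((hz.pow 2).const_mul b)

lemma isBigO_deriv_of_isBigO_inv_pow {F : Type*} [NormedAddCommGroup F] [NormedSpace ℂ F]
    {f : ℂ → F} {n : ℕ} (hd : ∀ᶠ w in cobounded ℂ, DifferentiableAt ℂ f w)
    (hf : f =O[cobounded ℂ] fun w => w⁻¹ ^ n) :
    deriv f =O[cobounded ℂ] fun w => w⁻¹ ^ (n + 1) := by
  obtain ⟨c, hc, hfc⟩ := hf.exists_pos
  obtain ⟨r, -, hr⟩ := hasBasis_cobounded_norm.eventually_iff.1 (hd.and hfc.bound)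
  refine IsBigO.of_bound (2 ^ (n + 1) * c) ?_
  filter_upwards [hasBasis_cobounded_norm.mem_of_mem (i := max (2 * r) 1) trivial] with w hw
  rw [max_le_iff] at hw
  have hρ : 0 < ‖w‖ / 2 := by linarith
  have hfar : ∀ z ∈ closedBall w (‖w‖ / 2), r ≤ ‖z‖ ∧ ‖w‖ / 2 ≤ ‖z‖ := fun z hz => by
    have := norm_sub_norm_le w z
    rw [mem_closedBall, dist_eq_norm, norm_sub_rev] at hz
    constructor <;> linarith
  have hcont : DiffContOnCl ℂ f (ball w (‖w‖ / 2)) := by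
    refine DifferentiableOn.diffContOnCl ?_
    rw [closure_ball w hρ.ne']
    exact fun z hz => (hr (hfar z hz).1).1.differentiableWithinAt
  have hsphere : ∀ z ∈ sphere w (‖w‖ / 2), ‖f z‖ ≤ c * (‖w‖ / 2)⁻¹ ^ n := fun z hz => by
    have hz := hfar z (sphere_subset_closedBall hz)
    calc ‖f z‖ ≤ c * ‖z⁻¹ ^ n‖ := (hr hz.1).2
      _ ≤ c * (‖w‖ / 2)⁻¹ ^ n := by
        rw [norm_pow, norm_inv]
        gcongr
        exact hz.2
  calc ‖deriv f w‖ ≤ c * (‖w‖ / 2)⁻¹ ^ n / (‖w‖ / 2) :=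
        norm_deriv_le_of_forall_mem_sphere_norm_le hρ hcont hsphere
    _ = 2 ^ (n + 1) * c * ‖w⁻¹ ^ (n + 1)‖ := by
      rw [norm_pow, norm_inv]
      field_simp
      ring

lemma norm_cpow_inv_two_sub_mul_re_le (q p : ℂ) : ‖q ^ (2⁻¹ : ℂ) - p‖ * p.re ≤ ‖q - p ^ 2‖ := by
  set u := q ^ (2⁻¹ : ℂ)
  have hu : 0 ≤ u.re := by rw [cpow_inv_two_re]; positivity
  calc ‖u - p‖ * p.re ≤ ‖u - p‖ * ‖u + p‖ := by
        gcongr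
        calc p.re ≤ (u + p).re := by rw [add_re]; linarith
          _ ≤ ‖u + p‖ := re_le_norm _
    _ = ‖q - p ^ 2‖ := by
        have hsq : u ^ 2 = q := cpow_ofNat_inv_pow q 2
        rw [← norm_mul, ← hsq]
        ring_nf

lemma Asymptotics.IsBigO.cpow_inv_two_sub {α : Type*} {l : Filter α} {q p : α → ℂ} {g : α → ℂ}
    (hp : Tendsto p l (𝓝 1)) (h : (fun a => q a - p a ^ 2) =O[l] g) :
    (fun a => q a ^ (2⁻¹ : ℂ) - p a) =O[l] g := by
  have hre : ∀ᶠ a in l, 1 / 2 ≤ (p a).re := by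
    have := (continuous_re.tendsto 1).comp hp
    rw [one_re] at this
    exact this.eventually (le_mem_nhds (by norm_num))
  refine (IsBigO.of_bound 2 ?_).trans h
  filter_upwards [hre] with a ha
  have := norm_cpow_inv_two_sub_mul_re_le (q a) (p a)
  nlinarith [norm_nonneg (q a ^ (2⁻¹ : ℂ) - p a)]

lemma isBigO_model_sq_sub (x t : ℂ) :
    (fun w : ℂ => ((1 + x / w + (x ^ 2 - 3 * t) / w ^ 2) * (1 + -x / w + 2 * t / w ^ 2)) ^ 2
      - (1 - 2 * t / w ^ 2)) =O[cobounded ℂ] fun w => w⁻¹ ^ 3 := by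
  -- With `z = w⁻¹`, `P q = 1 - t z² + z³ (a + b z)`; the coefficients of `z` and `z²` in
  -- `(P q)² - (1 - 2t z²)` vanish exactly for `P = 1 + x z + (x² - 3t) z²`.
  set a := x * (5 * t - x ^ 2)
  set b := 2 * t * (x ^ 2 - 3 * t)
  set M : ℂ → ℂ := fun z => t ^ 2 * z + 2 * (1 - t * z ^ 2) * (a + b * z) + z ^ 3 * (a + b * z) ^ 2
  have hM : M =O[𝓝 0] fun _ => (1 : ℂ) := (Continuous.tendsto (by fun_prop) 0).isBigO_one ℂ
  refine ((isBigO_refl (fun w : ℂ => w⁻¹ ^ 3) _).mul (hM.comp_tendsto tendsto_inv₀_cobounded)).congr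
    (fun w => ?_) (fun w => mul_one _)
  simp only [M, a, b, Function.comp]
  ring

lemma isBigO_sq_mul_deriv_div_sq_sub_sq (x t : ℂ) {G : ℂ → ℂ}
    (hd : ∀ᶠ w in cobounded ℂ, DifferentiableAt ℂ G w)
    (hE : (fun w => G w - (w - x + 2 * t / w)) =O[cobounded ℂ] fun w => w⁻¹ ^ 2) :
    (fun w => w ^ 2 * deriv G w / G w ^ 2 - (1 + x / w + (x ^ 2 - 3 * t) / w ^ 2) ^ 2)
      =O[cobounded ℂ] fun w => w⁻¹ ^ 3 := by
  set E := fun w => G w - (w - x + 2 * t / w)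
  set P := fun w : ℂ => 1 + x / w + (x ^ 2 - 3 * t) / w ^ 2
  set q := fun w : ℂ => 1 + -x / w + 2 * t / w ^ 2
  have hw0 : ∀ᶠ w in cobounded ℂ, w ≠ 0 := eventually_ne_cobounded 0
  have hderiv : ∀ᶠ w in cobounded ℂ, HasDerivAt E (deriv G w - (1 - 2 * t / w ^ 2)) w := by
    filter_upwards [hd, hw0] with w hGw hw
    exact hGw.hasDerivAt.sub (hasDerivAt_sub_add_div x (2 * t) hw)
  have hE' : deriv E =O[cobounded ℂ] fun w => w⁻¹ ^ 3 :=
    isBigO_deriv_of_isBigO_inv_pow (hderiv.mono fun w h => h.differentiableAt) hE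
  have hYq : (fun w => G w / w - q w) =O[cobounded ℂ] fun w => w⁻¹ ^ 3 := by
    refine ((isBigO_refl (fun w : ℂ => w⁻¹) _).mul hE).congr' ?_ (.of_eq (by ext; ring))
    filter_upwards [hw0] with w hw
    simp only [E, q]
    field_simp
    ring
  have hY : Tendsto (fun w => G w / w) (cobounded ℂ) (𝓝 1) := by
    have := (tendsto_one_add_div_add_div_sq (-x) (2 * t)).add
      (hYq.trans_tendsto (tendsto_inv_pow_cobounded three_ne_zero))
    rw [add_zero] at this
    exact this.congr fun w => add_sub_cancel _ _
  have hP := tendsto_one_add_div_add_div_sq x (x ^ 2 - 3 * t)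
  have hbdd : (fun w => P w ^ 2 * (G w / w + q w)) =O[cobounded ℂ] fun _ => (1 : ℂ) :=
    ((hP.pow 2).mul (hY.add (tendsto_one_add_div_add_div_sq (-x) (2 * t)))).isBigO_one ℂ
  have hnum : (fun w => deriv E w - ((P w * q w) ^ 2 - (1 - 2 * t / w ^ 2))
      - P w ^ 2 * (G w / w + q w) * (G w / w - q w)) =O[cobounded ℂ] fun w => w⁻¹ ^ 3 := by
    refine (hE'.sub (isBigO_model_sq_sub x t)).sub ?_
    simpa [mul_assoc] using hbdd.mul hYq
  have hden : (fun w => ((G w / w) ^ 2)⁻¹) =O[cobounded ℂ] fun _ => (1 : ℂ) :=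
    ((hY.pow 2).inv₀ (by norm_num)).isBigO_one ℂ
  refine (by simpa using hnum.mul hden : _ =O[cobounded ℂ] fun w => w⁻¹ ^ 3).congr' ?_ .rfl
  filter_upwards [hderiv, hY.eventually_ne one_ne_zero] with w hEw hYw
  obtain ⟨hG, hw⟩ := div_ne_zero_iff.1 hYw
  rw [hEw.deriv]
  simp only [P, q]
  field_simp
  ring

lemma exists_sqrt_expansion (x t : ℂ) {G : ℂ → ℂ} (han : ∀ᶠ w in cobounded ℂ, AnalyticAt ℂ G w)
    (hE : (fun w => G w - (w - x + 2 * t / w)) =O[cobounded ℂ] fun w => w⁻¹ ^ 2) :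
    ∃ S : ℂ → ℂ, ∃ c > 0, ∀ᶠ w in cobounded ℂ, DifferentiableAt ℂ S w ∧
      S w ^ 2 = deriv G w / G w ^ 2 ∧
      ‖w * S w - (1 + x / w + (x ^ 2 - 3 * t) / w ^ 2)‖ ≤ c / ‖w‖ ^ 3 := by
  set Q := fun w : ℂ => w ^ 2 * deriv G w / G w ^ 2
  have hQP := isBigO_sq_mul_deriv_div_sq_sub_sq x t (han.mono fun w h => h.differentiableAt) hE
  have hP := tendsto_one_add_div_add_div_sq x (x ^ 2 - 3 * t)
  have hQ : Tendsto Q (cobounded ℂ) (𝓝 1) := by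
    simpa using (hQP.trans_tendsto (tendsto_inv_pow_cobounded three_ne_zero)).add (hP.pow 2)
  obtain ⟨c, hc, hbound⟩ := (hQP.cpow_inv_two_sub hP).exists_pos
  refine ⟨fun w => w⁻¹ * Q w ^ (2⁻¹ : ℂ), c, hc, ?_⟩
  filter_upwards [han, eventually_ne_cobounded 0,
    hQ.eventually (isOpen_slitPlane.mem_nhds one_mem_slitPlane), hbound.bound] with w hGw hw hQw hb
  refine ⟨?_, ?_, ?_⟩
  · have hG0 : G w ≠ 0 := fun h => slitPlane_ne_zero hQw (by simp [Q, h])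
    have hQd : DifferentiableAt ℂ Q w := ((differentiableAt_pow 2).mul
      hGw.deriv.differentiableAt).div (hGw.differentiableAt.pow 2) (pow_ne_zero 2 hG0)
    exact (differentiableAt_inv hw).mul (hQd.cpow_const hQw)
  · simp only [mul_pow, cpow_ofNat_inv_pow, Q]
    field_simp
  · rw [← mul_assoc, mul_inv_cancel₀ hw, one_mul]
    rw [norm_pow, norm_inv, inv_pow, ← div_eq_mul_inv] at hb
    exact hb

theorem sqrt_expansion_general (t x : ℝ) (C R : ℝ)
    (G : ℂ → ℂ) (hhol : DifferentiableOn ℂ G {w : ℂ | R < ‖w‖})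
    (hG : ∀ w : ℂ, R < ‖w‖ →
      ‖G w - (w - (x : ℂ) + 2 * (t : ℂ) / w)‖ ≤ C / ‖w‖ ^ 2) :
    ∃ R''' : ℝ, R ≤ R''' ∧ ∃ C''' : ℝ, 0 < C''' ∧ ∃ S : ℂ → ℂ,
      DifferentiableOn ℂ S {w : ℂ | R''' < ‖w‖} ∧
      ∀ w : ℂ, R''' < ‖w‖ →
        (S w) ^ 2 = deriv G w / (G w) ^ 2 ∧
        ‖w * S w - (1 + (x : ℂ) / w + ((x : ℂ) ^ 2 - 3 * (t : ℂ)) / w ^ 2)‖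
          ≤ C''' / ‖w‖ ^ 3 := by
  have hfar : ∀ᶠ w in cobounded ℂ, R < ‖w‖ := tendsto_norm_cobounded_atTop.eventually_gt_atTop R
  have han := hhol.analyticOnNhd (isOpen_lt continuous_const continuous_norm)
  obtain ⟨S, c, hc, hS⟩ := exists_sqrt_expansion (x : ℂ) (t : ℂ) (hfar.mono han) <|
    .of_bound C <| hfar.mono fun w hw => by simpa [div_eq_mul_inv] using hG w hw
  obtain ⟨r, -, hr⟩ := hasBasis_cobounded_norm.eventually_iff.1 hS
  have hr' (w : ℂ) (hw : max R r < ‖w‖) := hr (show r ≤ ‖w‖ from (le_max_right R r).trans hw.le)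
  exact ⟨max R r, le_max_left R r, c, hc, S, fun w hw => (hr' w hw).1.differentiableWithinAt,
    fun w hw => (hr' w hw).2⟩

theorem sqrt_expansion (t x : ℝ) (ht : 0 ≤ t) (C R : ℝ) (hC : 0 < C) (hR : 0 < R)
    (G : ℂ → ℂ) (hhol : DifferentiableOn ℂ G {w : ℂ | R < ‖w‖})
    (hG : ∀ w : ℂ, R < ‖w‖ →
      ‖G w - (w - (x : ℂ) + 2 * (t : ℂ) / w)‖ ≤ C / ‖w‖ ^ 2) :
    ∃ R''' : ℝ, R ≤ R''' ∧ ∃ C''' : ℝ, 0 < C''' ∧ ∃ S : ℂ → ℂ,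
      DifferentiableOn ℂ S {w : ℂ | R''' < ‖w‖} ∧
      ∀ w : ℂ, R''' < ‖w‖ →
        (S w) ^ 2 = deriv G w / (G w) ^ 2 ∧
        ‖w * S w - (1 + (x : ℂ) / w + ((x : ℂ) ^ 2 - 3 * (t : ℂ)) / w ^ 2)‖
          ≤ C''' / ‖w‖ ^ 3 :=
  sqrt_expansion_general t x C R G hhol hG
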